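/- arXiv:2304.00661 — 8 statements merged into one kernel-verified Lean document; each statement's English description precedes it below -/
import Mathlib

section
/- The map τ : {0,1}^{ℤ²} → {0,1}^{ℤ²} defined by τ(x)(m,n) = x(m,n+1) if n ≤ m-1, τ(x)(m,m) = x(m,m), and τ(x)(m,n) = x(m,n-1) if n ≥ m+1, is injective, but its image equals {y : y(m,m-1) = y(m,m) = y(m,m+1) for all m ∈ ℤ} and hence contains no nonempty open subset of {0,1}^{ℤ²} in the prodiscrete topology. -/
theorem stmt_2 (τ : ((ℤ × ℤ) → Bool) → (ℤ × ℤ) → Bool)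
    (hτ : ∀ (x : (ℤ × ℤ) → Bool) (m n : ℤ),
      τ x (m, n) = if n ≤ m - 1 then x (m, n + 1)
        else if n = m then x (m, m) else x (m, n - 1)) :
    Function.Injective τ ∧
    Set.range τ =
      {y : (ℤ × ℤ) → Bool | ∀ m : ℤ, y (m, m - 1) = y (m, m) ∧ y (m, m) = y (m, m + 1)} ∧
    ∀ U : Set ((ℤ × ℤ) → Bool), IsOpen U → U.Nonempty → ¬ U ⊆ Set.range τ := by
  have hrange : Set.range τ =
      {y : (ℤ × ℤ) → Bool | ∀ m : ℤ, y (m, m - 1) = y (m, m) ∧ y (m, m) = y (m, m + 1)} := by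
    ext y
    constructor
    · rintro ⟨x, rfl⟩ m
      rw [hτ, hτ, hτ]
      constructor
      · simp only [if_pos (show (m - 1 : ℤ) ≤ m - 1 from le_refl _), sub_add_cancel,
          if_neg (show ¬ (m : ℤ) ≤ m - 1 by omega), if_pos rfl, if_true]
      · simp only [if_neg (show ¬ (m : ℤ) ≤ m - 1 by omega), if_pos rfl,
          if_neg (show ¬ (m + 1 : ℤ) ≤ m - 1 by omega),
          if_neg (show (m + 1 : ℤ) ≠ m by omega), add_sub_cancel_right, if_true]
    · intro hy
      refine ⟨fun p => if p.2 < p.1 then y (p.1, p.2 - 1)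
        else if p.2 = p.1 then y p else y (p.1, p.2 + 1), ?_⟩
      funext p
      obtain ⟨m, n⟩ := p
      rw [hτ]
      simp only
      rcases lt_trichotomy n m with hn | hn | hn
      · rw [if_pos (show n ≤ m - 1 by omega)]
        rcases eq_or_lt_of_le (show n + 1 ≤ m by omega) with h1 | h1
        · rw [if_neg (show ¬ (n + 1 : ℤ) < m by omega), if_pos h1]
          have h2 := (hy m).1
          rw [show n = m - 1 by omega]
          rw [h1] at *
          simpa using h2.symm
        · rw [if_pos h1]
          simp
      · subst hn
        rw [if_neg (show ¬ (n : ℤ) ≤ n - 1 by omega), if_pos rfl,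
          if_neg (lt_irrefl n)]
        simp
      · rw [if_neg (show ¬ n ≤ m - 1 by omega), if_neg (show n ≠ m by omega)]
        rcases eq_or_lt_of_le (show m ≤ n - 1 by omega) with h1 | h1
        · rw [if_neg (show ¬ (n - 1 : ℤ) < m by omega), if_pos h1.symm]
          have h2 := (hy m).2
          rw [show n = m + 1 by omega]
          simpa using h2
        · rw [if_neg (show ¬ (n - 1 : ℤ) < m by omega),
            if_neg (show (n - 1 : ℤ) ≠ m by omega)]
          simp
  refine ⟨?_, hrange, ?_⟩
  · intro a b h
    funext p
    obtain ⟨m, n⟩ := p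
    rcases lt_trichotomy n m with hn | hn | hn
    · have h1 := congrFun h (m, n - 1)
      rw [hτ, hτ] at h1
      rw [if_pos (show (n - 1 : ℤ) ≤ m - 1 by omega), if_pos (show (n - 1 : ℤ) ≤ m - 1 by omega),
        sub_add_cancel] at h1
      exact h1
    · subst hn
      have h1 := congrFun h (n, n)
      rw [hτ, hτ] at h1
      rw [if_neg (show ¬ (n : ℤ) ≤ n - 1 by omega), if_pos rfl] at h1
      rw [if_neg (show ¬ (n : ℤ) ≤ n - 1 by omega), if_pos rfl] at h1
      exact h1
    · have h1 := congrFun h (m, n + 1)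
      rw [hτ, hτ] at h1
      rw [if_neg (show ¬ (n + 1 : ℤ) ≤ m - 1 by omega), if_neg (show (n + 1 : ℤ) ≠ m by omega),
        if_neg (show ¬ (n + 1 : ℤ) ≤ m - 1 by omega), if_neg (show (n + 1 : ℤ) ≠ m by omega),
        add_sub_cancel_right] at h1
      exact h1
  · intro U hU hne hsub
    obtain ⟨x, hx⟩ := hne
    rw [isOpen_pi_iff] at hU
    obtain ⟨I, u, hu, hIu⟩ := hU x hx
    obtain ⟨m, hm⟩ := Infinite.exists_notMem_finset (I.image Prod.fst)
    set y := Function.update x (m, m) (!(x (m, m - 1))) with hydef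
    have hyU : y ∈ U := by
      apply hIu
      intro p hp
      have hne' : p ≠ (m, m) := by
        rintro rfl
        exact hm (Finset.mem_image_of_mem Prod.fst hp)
      rw [hydef, Function.update_of_ne hne']
      exact (hu p hp).2
    have hmem := hsub hyU
    rw [hrange] at hmem
    have h1 := (hmem m).1
    have hne1 : ((m, m - 1) : ℤ × ℤ) ≠ (m, m) := by
      simp only [ne_eq, Prod.mk.injEq, not_and]
      intro _
      omega
    rw [hydef, Function.update_of_ne hne1, Function.update_self] at h1
    exact Bool.not_ne_self _ h1.symm
end

section
/- The map σ : {0,1}^{ℤ²} → {0,1}^{ℤ²} defined by σ(x)(m,n) = x(m,n-1) if n ≤ m-1, σ(x)(m,m) = x(m,m-1) + x(m,m) + x(m,m+1) (mod 2), and σ(x)(m,n) = x(m,n+1) if n ≥ m+1, is surjective. -/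
theorem stmt_3 (σ : ((ℤ × ℤ) → ZMod 2) → (ℤ × ℤ) → ZMod 2)
    (hσ : ∀ (x : (ℤ × ℤ) → ZMod 2) (m n : ℤ),
      σ x (m, n) = if n ≤ m - 1 then x (m, n - 1)
        else if n = m then x (m, m - 1) + x (m, m) + x (m, m + 1) else x (m, n + 1)) :
    Function.Surjective σ := by
  intro y
  refine ⟨fun p => if p.2 ≤ p.1 - 2 then y (p.1, p.2 + 1)
    else if p.2 = p.1 then y p
    else if p.1 + 2 ≤ p.2 then y (p.1, p.2 - 1) else 0, ?_⟩
  funext p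
  obtain ⟨m, n⟩ := p
  rw [hσ]
  by_cases h1 : n ≤ m - 1
  · simp only [if_pos h1]
    have : n - 1 ≤ m - 2 := by omega
    simp only [if_pos this]
    norm_num
  · simp only [if_neg h1]
    by_cases h2 : n = m
    · subst h2
      simp only [if_pos rfl]
      have hA : ¬ (n - 1 ≤ n - 2) := by omega
      have hB : ¬ (n - 1 = n) := by omega
      have hC : ¬ (n + 2 ≤ n - 1) := by omega
      have hD : ¬ (n ≤ n - 2) := by omega
      have hE : ¬ (n + 1 ≤ n - 2) := by omega
      have hF : ¬ (n + 1 = n) := by omega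
      have hG : ¬ (n + 2 ≤ n + 1) := by omega
      simp only [if_neg hA, if_neg hB, if_neg hC, if_neg hD, if_pos rfl, if_neg hE,
        if_neg hF, if_neg hG]
      simp
    · simp only [if_neg h2]
      have hA : ¬ (n + 1 ≤ m - 2) := by omega
      have hB : ¬ (n + 1 = m) := by omega
      have hC : m + 2 ≤ n + 1 := by omega
      simp only [if_neg hA, if_neg hB, if_pos hC]
      norm_num
end

section
/- For the map σ of the previous statement and every m ∈ ℤ, σ(z_m) = σ(0) = 0, where z_m is the configuration with z_m(m,n) = 1 for n ∈ {m, m-1} and z_m(m,n) = 0 otherwise. In particular, σ restricted to any nonempty cylinder set of {0,1}^{ℤ²} fails to be pre-injective. -/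
theorem stmt_4 (σ : ((ℤ × ℤ) → ZMod 2) → (ℤ × ℤ) → ZMod 2)
    (hσ : ∀ (x : (ℤ × ℤ) → ZMod 2) (m n : ℤ),
      σ x (m, n) = if n ≤ m - 1 then x (m, n - 1)
        else if n = m then x (m, m - 1) + x (m, m) + x (m, m + 1) else x (m, n + 1))
    (z : ℤ → (ℤ × ℤ) → ZMod 2)
    (hz : ∀ (m a b : ℤ), z m (a, b) = if a = m ∧ (b = m ∨ b = m - 1) then 1 else 0) :
    (∀ m : ℤ, σ (z m) = σ 0 ∧ σ 0 = 0) ∧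
    ∀ (S : Finset (ℤ × ℤ)) (p : (ℤ × ℤ) → ZMod 2),
      ¬ (∀ x ∈ {x : (ℤ × ℤ) → ZMod 2 | ∀ g ∈ S, x g = p g},
         ∀ y ∈ {x : (ℤ × ℤ) → ZMod 2 | ∀ g ∈ S, x g = p g},
           {g : ℤ × ℤ | x g ≠ y g}.Finite → σ x = σ y → x = y) := by
  have hzero : σ 0 = 0 := by
    funext g
    obtain ⟨a, b⟩ := g
    rw [hσ]
    simp
  have hzm : ∀ m, σ (z m) = 0 := by
    intro m
    funext g
    obtain ⟨a, b⟩ := g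
    simp only [Pi.zero_apply]
    rw [hσ]
    split_ifs with h1 h2
    · rw [hz, if_neg (by omega)]
    · rw [hz, hz, hz]
      split_ifs <;> first | decide | omega
    · rw [hz, if_neg (by omega)]
  have hadd : ∀ x y, σ (x + y) = σ x + σ y := by
    intro x y
    funext g
    obtain ⟨a, b⟩ := g
    show σ (x + y) (a, b) = σ x (a, b) + σ y (a, b)
    rw [hσ, hσ, hσ]
    split_ifs <;> simp [Pi.add_apply] <;> ring
  constructor
  · intro m
    exact ⟨(hzm m).trans hzero.symm, hzero⟩
  · intro S p h
    obtain ⟨m, hm⟩ := Infinite.exists_notMem_finset (S.image Prod.fst)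
    have hzS : ∀ g ∈ S, z m g = 0 := by
      intro g hg
      obtain ⟨a, b⟩ := g
      have ha : a ∈ S.image Prod.fst := Finset.mem_image.mpr ⟨(a, b), hg, rfl⟩
      have ham : a ≠ m := fun hh => hm (hh ▸ ha)
      rw [hz, if_neg (by tauto)]
    have hy : ∀ g ∈ S, (p + z m) g = p g := by
      intro g hg
      simp [hzS g hg]
    have hfin : {g : ℤ × ℤ | p g ≠ (p + z m) g}.Finite := by
      apply Set.Finite.subset ((Set.finite_singleton ((m : ℤ), m - 1)).insert (m, m))
      intro g hg
      obtain ⟨a, b⟩ := g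
      simp only [Set.mem_setOf_eq, Pi.add_apply] at hg
      simp only [Set.mem_insert_iff, Set.mem_singleton_iff, Prod.mk.injEq]
      by_contra hmem
      push_neg at hmem
      obtain ⟨hm1, hm2⟩ := hmem
      have hz0 : z m (a, b) = 0 := by
        rw [hz, if_neg]
        rintro ⟨rfl, hb | hb⟩
        · exact hm1 rfl hb
        · exact hm2 rfl hb
      rw [hz0, add_zero] at hg
      exact hg rfl
    have hσeq : σ p = σ (p + z m) := by
      rw [hadd, hzm, add_zero]
    have heq := h p (fun g _ => rfl) (p + z m) hy hfin hσeq
    have h1 := congrFun heq (m, m)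
    simp only [Pi.add_apply, hz, if_pos (⟨rfl, Or.inl rfl⟩ : m = m ∧ ((m:ℤ) = m ∨ (m:ℤ) = m - 1)),
      left_eq_add] at h1
    exact one_ne_zero h1
end

section
/- Let G be an infinite amenable group with Følner net F = (F_i), A a finite nonempty alphabet, and X, Y ⊆ A^G subsets such that the restrictions to G∖S coincide, X|_{G∖S} = Y|_{G∖S}, for some finite S ⊆ G. Then the upper natural mean F-entropies agree: ent̄_F(X) = ent̄_F(Y). -/
/-!
A pattern of `X` on a window `E` is determined by a pattern of `Y` on `E` that agrees with it off
`S`, together with its values on the finitely many sites of `E ∩ S`. Hence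
`log |X_E| ≤ log |Y_E| + |S| log |A|`. In an infinite group the nonempty Følner sets grow without
bound, so after dividing by `|F_i|` the error term vanishes, and by symmetry the two upper limits
agree.
-/

open Filter Topology

lemma Real.log_natCast_le_log_natCast {m n : ℕ} (h : m ≤ n) : Real.log m ≤ Real.log n := by
  rcases m.eq_zero_or_pos with rfl | hm
  · simpa using Real.log_natCast_nonneg n
  · exact Real.log_le_log (by exact_mod_cast hm) (by exact_mod_cast h)

lemma Real.log_natCast_mul_le (m n : ℕ) : Real.log (m * n) ≤ Real.log m + Real.log n := by
  rcases m.eq_zero_or_pos with rfl | hm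
  · simpa using Real.log_natCast_nonneg n
  rcases n.eq_zero_or_pos with rfl | hn
  · simpa using Real.log_natCast_nonneg m
  · exact (Real.log_mul (by positivity) (by positivity)).le

lemma Filter.limsup_le_limsup_of_le_add_of_tendsto_zero {ι : Type*} {f : Filter ι} [f.NeBot]
    {u v w : ι → ℝ} (hu : IsBoundedUnder (· ≥ ·) f u) (hv_ge : IsBoundedUnder (· ≥ ·) f v)
    (hv_le : IsBoundedUnder (· ≤ ·) f v) (huvw : u ≤ᶠ[f] v + w) (hw : Tendsto w f (𝓝 0)) :
    limsup u f ≤ limsup v f := by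
  calc limsup u f ≤ limsup (v + w) f :=
        limsup_le_limsup huvw hu.isCoboundedUnder_le
          (isBoundedUnder_le_add hv_le hw.isBoundedUnder_le)
    _ ≤ limsup v f + limsup w f :=
        limsup_add_le hv_ge hv_le hw.isBoundedUnder_ge.isCoboundedUnder_le hw.isBoundedUnder_le
    _ = limsup v f := by rw [hw.limsup_eq, add_zero]

theorem Finset.card_le_card_of_sum_card_sdiff_image_mul_lt {G : Type*} [Group G] [DecidableEq G]
    {F T : Finset G} (h : ∑ g ∈ T, (F \ F.image (· * g)).card < F.card) : T.card ≤ F.card := by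
  obtain ⟨x, hxF, hxD⟩ : ∃ x ∈ F, x ∉ T.biUnion fun g => F \ F.image (· * g) :=
    Finset.exists_mem_notMem_of_card_lt_card (Finset.card_biUnion_le.trans_lt h)
  -- `x` lies in every translate `F * g`, `g ∈ T`, so `g ↦ x * g⁻¹` injects `T` into `F`
  refine Finset.card_le_card_of_injOn (fun g => x * g⁻¹) (fun g hg => ?_) ?_
  · have hxg : x ∈ F.image (· * g) := by
      by_contra hx
      exact hxD (Finset.mem_biUnion.mpr ⟨g, hg, Finset.mem_sdiff.mpr ⟨hxF, hx⟩⟩)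
    obtain ⟨y, hy, rfl⟩ := Finset.mem_image.mp hxg
    simpa using hy
  · intro a _ b _ hab
    simpa using hab

section Folner

variable {G I : Type*} [Group G] [DecidableEq G] {l : Filter I} {F : I → Finset G}

lemma eventually_card_eq_zero_or_le_of_folner [Infinite G]
    (hFol : ∀ g : G, Tendsto
      (fun i => (((F i) \ (F i).image (· * g)).card : ℝ) / (F i).card) l (𝓝 0)) (n : ℕ) :
    ∀ᶠ i in l, (F i).card = 0 ∨ n ≤ (F i).card := by
  obtain ⟨T, rfl⟩ := Infinite.exists_subset_card_eq G n
  have hsum : Tendsto (fun i => ∑ g ∈ T, (((F i) \ (F i).image (· * g)).card : ℝ) / (F i).card)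
      l (𝓝 0) := by
    simpa using tendsto_finsetSum T fun g _ => hFol g
  filter_upwards [hsum.eventually (eventually_lt_nhds one_pos)] with i hi
  refine (F i).card.eq_zero_or_pos.imp_right fun hpos =>
    Finset.card_le_card_of_sum_card_sdiff_image_mul_lt ?_
  rw [← Finset.sum_div, div_lt_one (by exact_mod_cast hpos)] at hi
  exact_mod_cast hi

/-- Empty `F i` satisfy the Følner condition vacuously and contribute `0⁻¹ = 0`. -/
lemma tendsto_inv_card_of_folner [Infinite G]
    (hFol : ∀ g : G, Tendsto
      (fun i => (((F i) \ (F i).image (· * g)).card : ℝ) / (F i).card) l (𝓝 0)) :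
    Tendsto (fun i => ((F i).card : ℝ)⁻¹) l (𝓝 0) := by
  refine tendsto_order.2 ⟨fun a ha => Eventually.of_forall fun i => ha.trans_le (by positivity),
    fun ε hε => ?_⟩
  obtain ⟨n, hn⟩ := exists_nat_gt ε⁻¹
  filter_upwards [eventually_card_eq_zero_or_le_of_folner hFol n] with i hi
  rcases hi with hi | hi
  · simpa [hi] using hε
  · have hn0 : (0 : ℝ) < n := (inv_pos.2 hε).trans hn
    calc ((F i).card : ℝ)⁻¹ ≤ (n : ℝ)⁻¹ := inv_anti₀ hn0 (by exact_mod_cast hi)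
      _ < ε := inv_lt_of_inv_lt₀ hε hn

end Folner

section PatternEntropy

variable {G A : Type*}

noncomputable def patternEntropy (X : Set (G → A)) (E : Finset G) : ℝ :=
  Real.log (((E : Set G).domRestrict '' X).ncard) / E.card

lemma patternEntropy_nonneg (X : Set (G → A)) (E : Finset G) : 0 ≤ patternEntropy X E :=
  div_nonneg (Real.log_natCast_nonneg _) (Nat.cast_nonneg _)

lemma patternEntropy_le_log_card [Finite A] (X : Set (G → A)) (E : Finset G) :
    patternEntropy X E ≤ Real.log (Nat.card A) := by
  refine div_le_of_le_mul₀ (Nat.cast_nonneg _) (Real.log_natCast_nonneg _) ?_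
  have hcard : ((E : Set G).domRestrict '' X).ncard ≤ Nat.card A ^ E.card := by
    simpa [Nat.card_fun] using Set.ncard_le_card ((E : Set G).domRestrict '' X)
  calc Real.log (((E : Set G).domRestrict '' X).ncard)
      ≤ Real.log ((Nat.card A ^ E.card : ℕ) : ℝ) := Real.log_natCast_le_log_natCast hcard
    _ = Real.log (Nat.card A) * E.card := by push_cast; rw [Real.log_pow, mul_comm]

lemma ncard_domRestrict_image_le_mul [Finite A] {X Y : Set (G → A)} {S : Set G}
    (hXY : Sᶜ.domRestrict '' X = Sᶜ.domRestrict '' Y) (E : Finset G) :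
    ((E : Set G).domRestrict '' X).ncard ≤
      ((E : Set G).domRestrict '' Y).ncard * Nat.card A ^ ((E : Set G) ∩ S).ncard := by
  have hmatch : ∀ p ∈ (E : Set G).domRestrict '' X, ∃ q ∈ (E : Set G).domRestrict '' Y,
      ∀ g : (E : Set G), g.1 ∉ S → q g = p g := by
    rintro _ ⟨x, hx, rfl⟩
    obtain ⟨y, hy, hyx⟩ : Sᶜ.domRestrict x ∈ Sᶜ.domRestrict '' Y :=
      hXY ▸ Set.mem_image_of_mem _ hx
    exact ⟨_, Set.mem_image_of_mem _ hy, fun g hg => congrFun hyx ⟨g, hg⟩⟩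
  choose q hqY hqp using hmatch
  let f : (E : Set G).domRestrict '' X →
      (E : Set G).domRestrict '' Y × (↥((E : Set G) ∩ S) → A) :=
    fun p => (⟨q p p.2, hqY p p.2⟩, fun g => p.1 ⟨g, g.2.1⟩)
  have hf : Function.Injective f := by
    rintro ⟨p, hp⟩ ⟨p', hp'⟩ h
    simp only [f, Prod.mk.injEq, Subtype.mk.injEq] at h
    refine Subtype.ext (funext fun g => ?_)
    by_cases hg : g.1 ∈ S
    · exact congrFun h.2 ⟨g, g.2, hg⟩
    · change p g = p' g
      rw [← hqp p hp g hg, ← hqp p' hp' g hg, h.1]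
  simpa [Nat.card_coe_set_eq, Nat.card_fun] using Nat.card_le_card_of_injective f hf

lemma patternEntropy_le_add [Finite A] {X Y : Set (G → A)} {S : Set G} (hS : S.Finite)
    (hXY : Sᶜ.domRestrict '' X = Sᶜ.domRestrict '' Y) (E : Finset G) :
    patternEntropy X E ≤ patternEntropy Y E + S.ncard * Real.log (Nat.card A) / E.card := by
  rw [patternEntropy, patternEntropy, ← add_div]
  gcongr
  calc Real.log (((E : Set G).domRestrict '' X).ncard)
      ≤ Real.log (((((E : Set G).domRestrict '' Y).ncard *
          Nat.card A ^ ((E : Set G) ∩ S).ncard : ℕ)) : ℝ) :=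
        Real.log_natCast_le_log_natCast (ncard_domRestrict_image_le_mul hXY E)
    _ ≤ Real.log (((E : Set G).domRestrict '' Y).ncard) + ((E : Set G) ∩ S).ncard *
          Real.log (Nat.card A) := by
        push_cast
        rw [← Real.log_pow]
        exact_mod_cast Real.log_natCast_mul_le _ _
    _ ≤ Real.log (((E : Set G).domRestrict '' Y).ncard) + S.ncard * Real.log (Nat.card A) := by
        gcongr
        exact Set.inter_subset_right

end PatternEntropy

lemma limsup_patternEntropy_le_of_domRestrict_compl_eq {G I A : Type*} [Group G] [DecidableEq G]
    [Infinite G] {l : Filter I} [l.NeBot] {F : I → Finset G}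
    (hFol : ∀ g : G, Tendsto
      (fun i => (((F i) \ (F i).image (· * g)).card : ℝ) / (F i).card) l (𝓝 0))
    [Finite A] {X Y : Set (G → A)} {S : Set G} (hS : S.Finite)
    (hXY : Sᶜ.domRestrict '' X = Sᶜ.domRestrict '' Y) :
    limsup (fun i => patternEntropy X (F i)) l ≤ limsup (fun i => patternEntropy Y (F i)) l := by
  have hbdd : ∀ Z : Set (G → A), IsBoundedUnder (· ≥ ·) l (fun i => patternEntropy Z (F i)) ∧
      IsBoundedUnder (· ≤ ·) l (fun i => patternEntropy Z (F i)) := fun Z =>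
    ⟨isBoundedUnder_of ⟨0, fun i => patternEntropy_nonneg Z (F i)⟩,
      isBoundedUnder_of ⟨_, fun i => patternEntropy_le_log_card Z (F i)⟩⟩
  have herr : Tendsto (fun i => S.ncard * Real.log (Nat.card A) / (F i).card) l (𝓝 0) := by
    simpa [div_eq_mul_inv] using (tendsto_inv_card_of_folner hFol).const_mul
      (S.ncard * Real.log (Nat.card A))
  exact limsup_le_limsup_of_le_add_of_tendsto_zero (hbdd X).1 (hbdd Y).1 (hbdd Y).2
    (Eventually.of_forall fun i => patternEntropy_le_add hS hXY (F i)) herr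

theorem stmt_10_general {G : Type*} [Group G] [DecidableEq G] [Infinite G]
    {I : Type*} [Preorder I] [IsDirected I (· ≤ ·)] [Nonempty I]
    (F : I → Finset G)
    (hFol : ∀ g : G, Tendsto
      (fun i => (((F i) \ (F i).image (· * g)).card : ℝ) / (F i).card) atTop (nhds 0))
    {A : Type*} [Fintype A]
    (X Y : Set (G → A)) (S : Set G) (hS : S.Finite)
    (hXY : (fun x (g : ↥(Sᶜ)) => x g.1) '' X = (fun x (g : ↥(Sᶜ)) => x g.1) '' Y) :
    limsup (fun i =>
        Real.log (((fun x (g : (F i : Set G)) => x g.1) '' X).ncard) / (F i).card) atTop =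
    limsup (fun i =>
        Real.log (((fun x (g : (F i : Set G)) => x g.1) '' Y).ncard) / (F i).card) atTop :=
  le_antisymm (limsup_patternEntropy_le_of_domRestrict_compl_eq hFol hS hXY)
    (limsup_patternEntropy_le_of_domRestrict_compl_eq hFol hS hXY.symm)

theorem stmt_10 {G : Type*} [Group G] [DecidableEq G] [Infinite G]
    {I : Type*} [Preorder I] [IsDirected I (· ≤ ·)] [Nonempty I]
    (F : I → Finset G) (hne : ∀ i, (F i).Nonempty)
    (hFol : ∀ g : G, Tendsto
      (fun i => (((F i) \ (F i).image (· * g)).card : ℝ) / (F i).card) atTop (nhds 0))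
    {A : Type*} [Fintype A] [Nonempty A]
    (X Y : Set (G → A)) (S : Set G) (hS : S.Finite)
    (hXY : (fun x (g : ↥(Sᶜ)) => x g.1) '' X = (fun x (g : ↥(Sᶜ)) => x g.1) '' Y) :
    limsup (fun i =>
        Real.log (((fun x (g : (F i : Set G)) => x g.1) '' X).ncard) / (F i).card) atTop =
    limsup (fun i =>
        Real.log (((fun x (g : (F i : Set G)) => x g.1) '' Y).ncard) / (F i).card) atTop :=
  stmt_10_general F hFol X Y S hS hXY
end

section
/- Let G be an amenable group, A a finite nonempty alphabet, and X ⊆ A^G. For any Følner net F of G, the chain of inequalities 0 ≤ Ent_(X) ≤ ent_F(X) ≤ ent̄_F(X) ≤ Ent̄(X) ≤ log|A| holds, relating lower/upper Banach mean entropies and lower/upper natural mean F-entropies. -/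
open Filter

private lemma log_ncard_nonneg' {T : Type*} (Y : Set T) : 0 ≤ Real.log Y.ncard := by
  rcases Nat.eq_zero_or_pos Y.ncard with h | h
  · simp [h]
  · exact Real.log_nonneg (by exact_mod_cast h)

private lemma log_ncard_le' {T : Type*} [Fintype T] (Y : Set T) :
    Real.log Y.ncard ≤ Real.log (Fintype.card T) := by
  have h : Y.ncard ≤ Fintype.card T := by
    simpa [Set.ncard_univ, Nat.card_eq_fintype_card] using
      Set.ncard_le_ncard (Set.subset_univ Y) Set.finite_univ
  rcases Nat.eq_zero_or_pos Y.ncard with h0 | h0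
  · rw [h0]
    simp only [Nat.cast_zero, Real.log_zero]
    exact Real.log_natCast_nonneg _
  · exact Real.log_le_log (by exact_mod_cast h0) (by exact_mod_cast h)

theorem stmt_12 {G : Type*} [Group G] [DecidableEq G]
    {I : Type*} [Preorder I] [IsDirected I (· ≤ ·)] [Nonempty I]
    (F : I → Finset G) (hne : ∀ i, (F i).Nonempty)
    (hFol : ∀ g : G, Tendsto
      (fun i => (((F i) \ (F i).image (· * g)).card : ℝ) / (F i).card) atTop (nhds 0))
    {A : Type*} [Fintype A] [Nonempty A] (X : Set (G → A)) :
    0 ≤ liminf (fun i => ⨅ g : G,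
        Real.log ((((fun x (h : (F i : Set G)) => x h.1) ''
          ((fun x (h : G) => x (g⁻¹ * h)) '' X))).ncard) / (F i).card) atTop ∧
    liminf (fun i => ⨅ g : G,
        Real.log ((((fun x (h : (F i : Set G)) => x h.1) ''
          ((fun x (h : G) => x (g⁻¹ * h)) '' X))).ncard) / (F i).card) atTop ≤
      liminf (fun i =>
        Real.log (((fun x (h : (F i : Set G)) => x h.1) '' X).ncard) / (F i).card) atTop ∧
    liminf (fun i =>
        Real.log (((fun x (h : (F i : Set G)) => x h.1) '' X).ncard) / (F i).card) atTop ≤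
      limsup (fun i =>
        Real.log (((fun x (h : (F i : Set G)) => x h.1) '' X).ncard) / (F i).card) atTop ∧
    limsup (fun i =>
        Real.log (((fun x (h : (F i : Set G)) => x h.1) '' X).ncard) / (F i).card) atTop ≤
      limsup (fun i => ⨆ g : G,
        Real.log ((((fun x (h : (F i : Set G)) => x h.1) ''
          ((fun x (h : G) => x (g⁻¹ * h)) '' X))).ncard) / (F i).card) atTop ∧
    limsup (fun i => ⨆ g : G,
        Real.log ((((fun x (h : (F i : Set G)) => x h.1) ''
          ((fun x (h : G) => x (g⁻¹ * h)) '' X))).ncard) / (F i).card) atTop ≤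
      Real.log (Fintype.card A) := by
  set L : ℝ := Real.log (Fintype.card A) with hL
  have hL0 : 0 ≤ L := Real.log_natCast_nonneg _
  -- term for arbitrary Y
  set t : (i : I) → Set (G → A) → ℝ := fun i Y =>
    Real.log (((fun x (h : (F i : Set G)) => x h.1) '' Y).ncard) / (F i).card with ht
  have hcard : ∀ i, (0:ℝ) < (F i).card := fun i => by exact_mod_cast (hne i).card_pos
  have hb : ∀ i (Y : Set (G → A)), 0 ≤ t i Y ∧ t i Y ≤ L := by
    intro i Y
    constructor
    · exact div_nonneg (log_ncard_nonneg' _) (hcard i).le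
    · rw [ht, div_le_iff₀ (hcard i)]
      calc Real.log (((fun x (h : (F i : Set G)) => x h.1) '' Y).ncard)
          ≤ Real.log (Fintype.card (Set.Elem (F i : Set G) → A)) := log_ncard_le' _
        _ = L * (F i).card := by
            have hc : Fintype.card (Set.Elem (F i : Set G) → A)
                = Fintype.card A ^ (F i).card := by
              simp [Fintype.card_fun]
            rw [hc]
            push_cast [Real.log_pow]
            ring
  have hshift1 : (fun (x : G → A) (h : G) => x ((1:G)⁻¹ * h)) '' X = X := by
    have : (fun (x : G → A) (h : G) => x ((1:G)⁻¹ * h)) = id := by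
      funext x h; simp
    simp [this]
  set u : I → ℝ := fun i => t i X with hu
  set vi : I → ℝ := fun i => ⨅ g : G, t i ((fun x (h : G) => x (g⁻¹ * h)) '' X) with hvi
  set vs : I → ℝ := fun i => ⨆ g : G, t i ((fun x (h : G) => x (g⁻¹ * h)) '' X) with hvs
  have hvi0 : ∀ i, 0 ≤ vi i := fun i => le_ciInf fun g => (hb i _).1
  have hviu : ∀ i, vi i ≤ u i := by
    intro i
    have := ciInf_le (f := fun g : G => t i ((fun x (h : G) => x (g⁻¹ * h)) '' X))
      ⟨0, by rintro x ⟨g, rfl⟩; exact (hb i _).1⟩ (1 : G)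
    rwa [hshift1] at this
  have huvs : ∀ i, u i ≤ vs i := by
    intro i
    have := le_ciSup (f := fun g : G => t i ((fun x (h : G) => x (g⁻¹ * h)) '' X))
      ⟨L, by rintro x ⟨g, rfl⟩; exact (hb i _).2⟩ (1 : G)
    rwa [hshift1] at this
  have hvsL : ∀ i, vs i ≤ L := fun i => ciSup_le fun g => (hb i _).2
  have hvi_ub : IsBoundedUnder (· ≤ ·) atTop vi :=
    isBoundedUnder_of ⟨L, fun i => (hviu i).trans ((hb i X).2)⟩
  have hvi_lb : IsBoundedUnder (· ≥ ·) atTop vi := isBoundedUnder_of ⟨0, hvi0⟩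
  have hu_ub : IsBoundedUnder (· ≤ ·) atTop u := isBoundedUnder_of ⟨L, fun i => (hb i X).2⟩
  have hu_lb : IsBoundedUnder (· ≥ ·) atTop u := isBoundedUnder_of ⟨0, fun i => (hb i X).1⟩
  have hvs_ub : IsBoundedUnder (· ≤ ·) atTop vs := isBoundedUnder_of ⟨L, hvsL⟩
  have hvs_lb : IsBoundedUnder (· ≥ ·) atTop vs :=
    isBoundedUnder_of ⟨0, fun i => le_trans (hb i X).1 (huvs i)⟩
  refine ⟨?_, ?_, ?_, ?_, ?_⟩
  · exact le_liminf_of_le hvi_ub.isCoboundedUnder_ge (Eventually.of_forall hvi0)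
  · exact liminf_le_liminf (Eventually.of_forall hviu) (hu := hvi_lb) (hv := hu_ub.isCoboundedUnder_ge)
  · exact liminf_le_limsup hu_ub hu_lb
  · exact limsup_le_limsup (Eventually.of_forall huvs) (hu := hu_lb.isCoboundedUnder_le) (hv := hvs_ub)
  · exact limsup_le_of_le hvs_lb.isCoboundedUnder_le (Eventually.of_forall hvsL)
end

section
/- Let G be an infinite group, A a group, and τ : A^G → A^G a G-equivariant continuous group homomorphism (group cellular automaton). If there exists a nonempty open G-invariant subset U ⊆ A^G such that τ restricted to U is injective, then τ is injective on all of A^G. -/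
/-!
Since τ is a group homomorphism it suffices to show that its kernel is trivial. A nonempty open
shift-invariant subset U of A^G is dense when G is infinite: a basic open set constrains only
finitely many coordinates, so a suitable translate of a point of U can be glued to any point of a
given basic open set. Hence for k in the kernel the open set U ∩ U k⁻¹ is nonempty, and for x in
it the points x k and x of U have the same image, so k = 1.
-/

open Pointwise

theorem Infinite.exists_forall_mul_notMem_finset {G : Type*} [Group G] [Infinite G]
    (E F : Finset G) : ∃ g : G, ∀ f ∈ F, g * f ∉ E := by
  classical
  obtain ⟨g, hg⟩ := Infinite.exists_notMem_finset (E * F⁻¹)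
  refine ⟨g, fun f hf hgf => hg ?_⟩
  simpa using Finset.mul_mem_mul hgf (Finset.inv_mem_inv hf)

theorem dense_of_isOpen_of_shift_mem {G A : Type*} [Group G] [Infinite G] [TopologicalSpace A]
    {U : Set (G → A)} (hUopen : IsOpen U) (hUne : U.Nonempty)
    (hUinv : ∀ (g : G) (x : G → A), x ∈ U → (fun h => x (g⁻¹ * h)) ∈ U) : Dense U := by
  classical
  refine dense_iff_inter_open.mpr fun W hW ⟨w, hw⟩ => ?_
  obtain ⟨u, hu⟩ := hUne
  obtain ⟨F, s, hs, hFs⟩ := isOpen_pi_iff.mp hUopen u hu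
  obtain ⟨E, t, ht, hEt⟩ := isOpen_pi_iff.mp hW w hw
  obtain ⟨g, hg⟩ := Infinite.exists_forall_mul_notMem_finset E F
  let x : G → A := fun h => if h ∈ E then w h else u (g⁻¹ * h)
  have hxW : x ∈ W := hEt fun e he => by simpa [x, Finset.mem_coe.mp he] using (ht e he).2
  have hxU : (fun h => x (g * h)) ∈ U := hFs fun f hf => by simpa [x, hg f hf] using (hs f hf).2
  exact ⟨x, hxW, by simpa using hUinv g _ hxU⟩

theorem MonoidHom.injective_of_injOn_of_isOpen_of_dense {M N : Type*} [Group M]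
    [TopologicalSpace M] [ContinuousMul M] [Group N] (φ : M →* N) {U : Set M}
    (hUopen : IsOpen U) (hUdense : Dense U) (hinj : Set.InjOn φ U) : Function.Injective φ := by
  refine (injective_iff_map_eq_one φ).mpr fun k hk => ?_
  obtain ⟨u, hu⟩ := hUdense.nonempty
  have hV : ((· * k) ⁻¹' U).Nonempty := ⟨u * k⁻¹, by simpa using hu⟩
  obtain ⟨x, hxkU, hxU⟩ :=
    hUdense.inter_open_nonempty _ (hUopen.preimage (continuous_mul_const k)) hV
  have hφ : φ (x * k) = φ x := by rw [map_mul, hk, mul_one]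
  exact mul_eq_left.mp (hinj hxkU hxU hφ)

theorem stmt_13_general {G : Type*} [Group G] [Infinite G] {A : Type*} [Group A]
    [TopologicalSpace A] [DiscreteTopology A]
    (τ : (G → A) → G → A)
    (hhom : ∀ x y : G → A, τ (x * y) = τ x * τ y)
    (U : Set (G → A)) (hUopen : IsOpen U) (hUne : U.Nonempty)
    (hUinv : ∀ (g : G) (x : G → A), x ∈ U → (fun h => x (g⁻¹ * h)) ∈ U)
    (hinj : Set.InjOn τ U) :
    Function.Injective τ :=
  (MonoidHom.mk' τ hhom).injective_of_injOn_of_isOpen_of_dense hUopen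
    (dense_of_isOpen_of_shift_mem hUopen hUne hUinv) hinj

theorem stmt_13 {G : Type*} [Group G] [Infinite G] {A : Type*} [Group A]
    [TopologicalSpace A] [DiscreteTopology A]
    (τ : (G → A) → G → A) (hcont : Continuous τ)
    (hequiv : ∀ (g : G) (x : G → A), τ (fun h => x (g⁻¹ * h)) = fun h => τ x (g⁻¹ * h))
    (hhom : ∀ x y : G → A, τ (x * y) = τ x * τ y)
    (U : Set (G → A)) (hUopen : IsOpen U) (hUne : U.Nonempty)
    (hUinv : ∀ (g : G) (x : G → A), x ∈ U → (fun h => x (g⁻¹ * h)) ∈ U)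
    (hinj : Set.InjOn τ U) :
    Function.Injective τ :=
  stmt_13_general τ hhom U hUopen hUne hUinv hinj
end

section
/- Let G be an infinite amenable group, A a finite alphabet, and τ : A^G → A^G a non-uniform cellular automaton with finite memory such that τ restricted to some nonempty open subset U ⊆ A^G is pre-injective. Then ent̄_F(τ(U)) = log|A| for every Følner net F of G. -/
open Filter

theorem stmt_16 {G : Type*} [Group G] [DecidableEq G] [Infinite G]
    {A : Type*} [Fintype A] [Nonempty A] [TopologicalSpace A] [DiscreteTopology A]
    {I : Type*} [Preorder I] [IsDirected I (· ≤ ·)] [Nonempty I]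
    (F : I → Finset G) (hne : ∀ i, (F i).Nonempty)
    (hFol : ∀ g : G, Tendsto
      (fun i => (((F i) \ (F i).image (· * g)).card : ℝ) / (F i).card) atTop (nhds 0))
    (M : Finset G) (s : G → (↥(M : Set G) → A) → A)
    (τ : (G → A) → G → A)
    (hτ : ∀ (x : G → A) (g : G), τ x g = s g (fun m => x (g * m.1)))
    (U : Set (G → A)) (hUopen : IsOpen U) (hUne : U.Nonempty)
    (hpre : ∀ x ∈ U, ∀ y ∈ U, {g : G | x g ≠ y g}.Finite → τ x = τ y → x = y) :
    limsup (fun i =>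
        Real.log (((fun x (g : (F i : Set G)) => x g.1) '' (τ '' U)).ncard) / (F i).card)
        atTop = Real.log (Fintype.card A) := by
  classical
  have hA1 : (1:ℕ) ≤ Fintype.card A := Fintype.card_pos
  set a : ℝ := Real.log (Fintype.card A) with ha
  have ha0 : 0 ≤ a := Real.log_nonneg (by exact_mod_cast hA1)
  have hApos : (0:ℝ) < Fintype.card A := by exact_mod_cast hA1
  -- extract a cylinder inside U
  obtain ⟨x₀, hx₀⟩ := hUne
  obtain ⟨Ω, u, hu, hsub⟩ := isOpen_pi_iff.1 hUopen x₀ hx₀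
  have hcyl : ∀ x : G → A, (∀ g ∈ Ω, x g = x₀ g) → x ∈ U := by
    intro x hx
    refine hsub ?_
    rw [Set.mem_pi]
    intro g hg
    rw [hx g hg]
    exact (hu g hg).2
  set N : Finset G := insert 1 M with hN
  -- locality of τ
  have hloc : ∀ x y : G → A, ∀ g : G, (∀ m ∈ N, x (g * m) = y (g * m)) → τ x g = τ y g := by
    intro x y g h
    rw [hτ, hτ]
    congr 1
    funext m
    exact h m.1 (Finset.mem_insert_of_mem m.2)
  -- interior sets
  set D : I → Finset G := fun i =>
    (F i).filter (fun d => d ∉ Ω ∧ ∀ m ∈ N, d * m⁻¹ ∈ F i) with hD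
  -- counting: the key injection
  have hcount : ∀ i, Fintype.card A ^ (D i).card ≤
      ((fun x (g : ↥(F i : Set G)) => x g.1) '' (τ '' U)).ncard ∧
      ((fun x (g : ↥(F i : Set G)) => x g.1) '' (τ '' U)).ncard ≤
        Fintype.card A ^ (F i).card := by
    intro i
    set Si : Set (↥(F i : Set G) → A) := (fun x (g : ↥(F i : Set G)) => x g.1) '' (τ '' U)
      with hSi
    set xf : (↥(D i) → A) → (G → A) :=
      fun v g => if h : g ∈ D i then v ⟨g, h⟩ else x₀ g with hxf
    have hDmem : ∀ d, d ∈ D i → d ∈ F i ∧ d ∉ Ω ∧ ∀ m ∈ N, d * m⁻¹ ∈ F i := by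
      intro d hd
      have := Finset.mem_filter.1 hd
      exact ⟨this.1, this.2.1, this.2.2⟩
    have hxfU : ∀ v, xf v ∈ U := by
      intro v
      refine hcyl _ ?_
      intro g hg
      have : g ∉ D i := fun h => (hDmem g h).2.1 hg
      simp [hxf, this]
    have hdiff : ∀ v w, {g : G | xf v g ≠ xf w g} ⊆ (D i : Set G) := by
      intro v w g hg
      by_contra h
      have h' : g ∉ D i := by simpa using h
      exact hg (by simp [hxf, h'])
    have hout : ∀ v w, ∀ g : G, g ∉ F i → τ (xf v) g = τ (xf w) g := by
      intro v w g hg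
      refine hloc _ _ _ ?_
      intro m hm
      have hgm : g * m ∉ D i := by
        intro h
        have := (hDmem _ h).2.2 m hm
        rw [mul_inv_cancel_right] at this
        exact hg this
      simp [hxf, hgm]
    have hΦmem : ∀ v, (fun g : ↥(F i : Set G) => τ (xf v) g.1) ∈ Si := by
      intro v
      exact ⟨τ (xf v), ⟨xf v, hxfU v, rfl⟩, rfl⟩
    set Φ : (↥(D i) → A) → ↥Si := fun v => ⟨fun g => τ (xf v) g.1, hΦmem v⟩ with hΦ
    have hΦinj : Function.Injective Φ := by
      intro v w h
      have h' : ∀ g : ↥(F i : Set G), τ (xf v) g.1 = τ (xf w) g.1 :=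
        fun g => congrFun (congrArg Subtype.val h) g
      have hττ : τ (xf v) = τ (xf w) := by
        funext g
        by_cases hg : g ∈ F i
        · exact h' ⟨g, hg⟩
        · exact hout v w g hg
      have hfin : {g : G | xf v g ≠ xf w g}.Finite :=
        Set.Finite.subset (D i).finite_toSet (hdiff v w)
      have hxx := hpre _ (hxfU v) _ (hxfU w) hfin hττ
      funext d
      have : xf v d.1 = xf w d.1 := congrFun hxx d.1
      simpa [hxf, d.2] using this
    constructor
    · have h1 : Fintype.card A ^ (D i).card = Nat.card (↥(D i) → A) := by
        rw [Nat.card_eq_fintype_card, Fintype.card_fun, Fintype.card_coe]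
      have h2 : Nat.card (↥(D i) → A) ≤ Nat.card ↥Si :=
        Nat.card_le_card_of_injective Φ hΦinj
      rw [h1, ← Nat.card_coe_set_eq]
      exact h2
    · have h3 : Nat.card ↥Si ≤ Nat.card (↥(F i) → A) := by
        refine Nat.card_le_card_of_injective
          (fun x (g : ↥(F i)) => x.1 ⟨g.1, g.2⟩) ?_
        intro x y h
        apply Subtype.ext
        funext g
        exact congrFun h ⟨g.1, g.2⟩
      have h4 : Nat.card (↥(F i) → A) = Fintype.card A ^ (F i).card := by
        rw [Nat.card_eq_fintype_card, Fintype.card_fun, Fintype.card_coe]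
      rw [← Nat.card_coe_set_eq, ← h4]
      exact h3
  have hcardpos : ∀ i, (0:ℝ) < (F i).card := by
    intro i; exact_mod_cast (hne i).card_pos
  -- F i has cards tending to infinity
  have hFinf : Tendsto (fun i => ((F i).card : ℝ)) atTop atTop := by
    rw [tendsto_atTop]
    intro b
    obtain ⟨T, hT⟩ := Infinite.exists_subset_card_eq G ⌈b⌉₊
    have hsum : Tendsto (fun i => ∑ g ∈ T,
        (((F i) \ (F i).image (· * g)).card : ℝ) / (F i).card) atTop (nhds 0) := by
      have := tendsto_finset_sum T (fun g (_ : g ∈ T) => hFol g)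
      simpa using this
    have hev : ∀ᶠ i in atTop, (∑ g ∈ T,
        (((F i) \ (F i).image (· * g)).card : ℝ) / (F i).card) < 1 :=
      hsum.eventually_lt_const one_pos
    filter_upwards [hev] with i hi
    have hpos := hcardpos i
    have hslt : (∑ g ∈ T, (((F i) \ (F i).image (· * g)).card : ℝ)) < (F i).card := by
      rw [← Finset.sum_div] at hi
      exact (div_lt_one hpos).1 hi
    have hx : ∃ x ∈ F i, ∀ g ∈ T, x ∈ (F i).image (· * g) := by
      by_contra h
      push_neg at h
      have hsubset : F i ⊆ T.biUnion (fun g => (F i) \ (F i).image (· * g)) := by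
        intro x hx
        obtain ⟨g, hg, hgx⟩ := h x hx
        exact Finset.mem_biUnion.2 ⟨g, hg, Finset.mem_sdiff.2 ⟨hx, hgx⟩⟩
      have h1 : (F i).card ≤ ∑ g ∈ T, ((F i) \ (F i).image (· * g)).card :=
        le_trans (Finset.card_le_card hsubset) Finset.card_biUnion_le
      have h2 : ((F i).card : ℝ) ≤ ∑ g ∈ T, (((F i) \ (F i).image (· * g)).card : ℝ) := by
        exact_mod_cast h1
      linarith
    obtain ⟨x, _, hxT⟩ := hx
    have hk : T.card ≤ (F i).card := by
      refine Finset.card_le_card_of_injOn (fun g => x * g⁻¹) ?_ ?_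
      · intro g hg
        obtain ⟨f, hf, hfg⟩ := Finset.mem_image.1 (hxT g hg)
        show x * g⁻¹ ∈ F i
        rw [← hfg]
        simpa using hf
      · intro g1 _ g2 _ h
        have h' : x * g1⁻¹ = x * g2⁻¹ := h
        have h'' := mul_left_cancel h'
        simpa using congrArg (·⁻¹) h''
    rw [hT] at hk
    calc b ≤ (⌈b⌉₊ : ℝ) := Nat.le_ceil b
    _ ≤ (F i).card := by exact_mod_cast hk
  -- the error term
  have hΩ0 : Tendsto (fun i => ((Ω.card : ℝ)) / (F i).card) atTop (nhds 0) :=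
    Tendsto.div_atTop tendsto_const_nhds hFinf
  set E : I → ℝ := fun i => (Ω.card : ℝ) / (F i).card +
    ∑ m ∈ N, (((F i) \ (F i).image (· * m)).card : ℝ) / (F i).card with hE
  have hE0 : Tendsto E atTop (nhds 0) := by
    have h2 : Tendsto (fun i => ∑ m ∈ N,
        (((F i) \ (F i).image (· * m)).card : ℝ) / (F i).card) atTop (nhds 0) := by
      have := tendsto_finset_sum N (fun m (_ : m ∈ N) => hFol m)
      simpa using this
    rw [hE]
    simpa using hΩ0.add h2
  -- card bound : F i minus D i is small
  have hsubcard : ∀ i, (F i).card ≤ (D i).card + (Ω.card +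
      ∑ m ∈ N, ((F i) \ (F i).image (· * m)).card) := by
    intro i
    have hsubset : F i ⊆ (D i) ∪ (Ω ∪ N.biUnion (fun m => (F i) \ (F i).image (· * m))) := by
      intro d hd
      by_cases h : d ∈ D i
      · exact Finset.mem_union_left _ h
      · refine Finset.mem_union_right _ ?_
        simp only [hD, Finset.mem_filter] at h
        push_neg at h
        rcases Classical.em (d ∈ Ω) with hΩd | hΩd
        · exact Finset.mem_union_left _ hΩd
        · obtain ⟨m, hm, hmd⟩ := h hd hΩd
          refine Finset.mem_union_right _ (Finset.mem_biUnion.2 ⟨m, hm, ?_⟩)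
          refine Finset.mem_sdiff.2 ⟨hd, ?_⟩
          intro hdi
          obtain ⟨f, hf, hfm⟩ := Finset.mem_image.1 hdi
          apply hmd
          rw [← hfm]
          simpa using hf
    calc (F i).card ≤ ((D i) ∪ (Ω ∪ N.biUnion (fun m => (F i) \ (F i).image (· * m)))).card :=
          Finset.card_le_card hsubset
    _ ≤ (D i).card + (Ω ∪ N.biUnion (fun m => (F i) \ (F i).image (· * m))).card :=
          Finset.card_union_le _ _
    _ ≤ (D i).card + (Ω.card + (N.biUnion (fun m => (F i) \ (F i).image (· * m))).card) :=
          Nat.add_le_add_left (Finset.card_union_le _ _) _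
    _ ≤ (D i).card + (Ω.card + ∑ m ∈ N, ((F i) \ (F i).image (· * m)).card) :=
          Nat.add_le_add_left (Nat.add_le_add_left Finset.card_biUnion_le _) _
  -- ratio tends to 1
  have hratio : Tendsto (fun i => ((D i).card : ℝ) / (F i).card) atTop (nhds 1) := by
    have hub : ∀ i, ((D i).card : ℝ) / (F i).card ≤ 1 := by
      intro i
      rw [div_le_one (hcardpos i)]
      exact_mod_cast Finset.card_le_card (Finset.filter_subset _ _)
    have hlb : ∀ i, 1 - E i ≤ ((D i).card : ℝ) / (F i).card := by
      intro i
      have hpos := hcardpos i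
      have h1 : ((F i).card : ℝ) ≤ ((D i).card : ℝ) + ((Ω.card : ℝ) +
          ∑ m ∈ N, (((F i) \ (F i).image (· * m)).card : ℝ)) := by
        exact_mod_cast hsubcard i
      have h2 : (1:ℝ) ≤ ((D i).card : ℝ) / (F i).card + E i := by
        have heq : ((D i).card : ℝ) / (F i).card + E i
            = (((D i).card : ℝ) + ((Ω.card : ℝ) +
              ∑ m ∈ N, (((F i) \ (F i).image (· * m)).card : ℝ))) / (F i).card := by
          simp only [hE]
          rw [← Finset.sum_div]
          ring
        rw [heq, le_div_iff₀ hpos, one_mul]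
        exact h1
      linarith
    refine tendsto_of_tendsto_of_tendsto_of_le_of_le' ?_ ?_
      (Eventually.of_forall hlb) (Eventually.of_forall hub)
    · simpa using (tendsto_const_nhds (x := (1:ℝ)) (f := atTop)).sub hE0
    · exact tendsto_const_nhds
  -- final squeeze
  haveI : (atTop : Filter I).NeBot := atTop_neBot_iff.2 ⟨‹Nonempty I›, ‹_›⟩
  have hterm : Tendsto (fun i =>
      Real.log (((fun x (g : ↥(F i : Set G)) => x g.1) '' (τ '' U)).ncard) / (F i).card)
      atTop (nhds a) := by
    have hlow : ∀ i, (((D i).card : ℝ) / (F i).card) * a ≤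
        Real.log (((fun x (g : ↥(F i : Set G)) => x g.1) '' (τ '' U)).ncard) / (F i).card := by
      intro i
      have h1 : ((Fintype.card A : ℝ) ^ (D i).card) ≤
          (((fun x (g : ↥(F i : Set G)) => x g.1) '' (τ '' U)).ncard : ℝ) := by
        exact_mod_cast (hcount i).1
      have h2 : ((D i).card : ℝ) * a ≤
          Real.log (((fun x (g : ↥(F i : Set G)) => x g.1) '' (τ '' U)).ncard) := by
        have := Real.log_le_log (pow_pos hApos _) h1
        rwa [Real.log_pow] at this
      rw [div_mul_eq_mul_div]
      exact div_le_div_of_nonneg_right h2 (hcardpos i).le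
    have hup : ∀ i,
        Real.log (((fun x (g : ↥(F i : Set G)) => x g.1) '' (τ '' U)).ncard) / (F i).card
          ≤ a := by
      intro i
      have h1 : (((fun x (g : ↥(F i : Set G)) => x g.1) '' (τ '' U)).ncard : ℝ) ≤
          (Fintype.card A : ℝ) ^ (F i).card := by
        exact_mod_cast (hcount i).2
      have hnc1 : (1:ℝ) ≤ (((fun x (g : ↥(F i : Set G)) => x g.1) '' (τ '' U)).ncard : ℝ) := by
        have h2 : 1 ≤ ((fun x (g : ↥(F i : Set G)) => x g.1) '' (τ '' U)).ncard :=
          le_trans (Nat.one_le_pow _ _ hA1) (hcount i).1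
        exact_mod_cast h2
      have h3 : Real.log (((fun x (g : ↥(F i : Set G)) => x g.1) '' (τ '' U)).ncard) ≤
          ((F i).card : ℝ) * a := by
        have := Real.log_le_log (by linarith) h1
        rwa [Real.log_pow] at this
      rw [div_le_iff₀ (hcardpos i), mul_comm]
      exact h3
    refine tendsto_of_tendsto_of_tendsto_of_le_of_le' ?_ tendsto_const_nhds
      (Eventually.of_forall hlow) (Eventually.of_forall hup)
    simpa using hratio.mul_const a
  exact hterm.limsup_eq
end

section
/- Let G be an infinite amenable group, A a finite alphabet, and τ : A^G → A^G a cellular automaton (G-equivariant map with finite memory). If there is a nonempty open set U ⊆ A^G such that τ|_U is pre-injective, then τ is surjective. -/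
open Filter

private lemma cyl_of_open {G A : Type*} [TopologicalSpace A] {U : Set (G → A)}
    (hU : IsOpen U) {u : G → A} (hu : u ∈ U) :
    ∃ s : Finset G, ∀ z : G → A, (∀ g ∈ s, z g = u g) → z ∈ U := by
  rw [isOpen_pi_iff] at hU
  obtain ⟨s, t, h1, h2⟩ := hU u hu
  refine ⟨s, fun z hz => h2 ?_⟩
  intro g hg
  rw [hz g hg]
  exact (h1 g hg).2

private lemma goe_greedy {G : Type*} [Group G] [DecidableEq G] (Ω : Finset G) (hΩ : Ω.Nonempty)
    (B : Finset G) : ∃ T : Finset G, T ⊆ B ∧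
      (∀ t ∈ T, ∀ t' ∈ T, t ≠ t' → Disjoint (Ω.image (t * ·)) (Ω.image (t' * ·))) ∧
      B ⊆ T.biUnion (fun t => (Ω ×ˢ Ω).image fun q => t * q.1 * q.2⁻¹) := by
  induction B using Finset.strongInduction with
  | _ B ih =>
    rcases B.eq_empty_or_nonempty with rfl | ⟨b, hb⟩
    · exact ⟨∅, by simp⟩
    · have hbne : (Ω.image (b * ·)).Nonempty := hΩ.image _
      have hss : B.filter (fun g => Disjoint (Ω.image (g * ·)) (Ω.image (b * ·))) ⊂ B := by
        refine ⟨Finset.filter_subset _ _, fun h => ?_⟩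
        have := h hb
        rw [Finset.mem_filter] at this
        exact hbne.ne_empty ((Finset.disjoint_self_iff_empty _).mp this.2)
      obtain ⟨T', hT'B, hdisj, hcov⟩ := ih _ hss
      have hT'B' := fun {t} (ht : t ∈ T') => Finset.mem_filter.mp (hT'B ht)
      refine ⟨insert b T', ?_, ?_, ?_⟩
      · exact Finset.insert_subset hb (hT'B.trans (Finset.filter_subset _ _))
      · intro t ht t' ht' hne
        rcases Finset.mem_insert.mp ht with rfl | htT
        · rcases Finset.mem_insert.mp ht' with rfl | ht'T
          · exact absurd rfl hne
          · exact ((hT'B' ht'T).2).symm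
        · rcases Finset.mem_insert.mp ht' with rfl | ht'T
          · exact (hT'B' htT).2
          · exact hdisj t htT t' ht'T hne
      · intro g hg
        by_cases hgB : g ∈ B.filter (fun g => Disjoint (Ω.image (g * ·)) (Ω.image (b * ·)))
        · have := hcov hgB
          rw [Finset.mem_biUnion] at this ⊢
          obtain ⟨t, ht, hgt⟩ := this
          exact ⟨t, Finset.mem_insert_of_mem ht, hgt⟩
        · have hnd : ¬ Disjoint (Ω.image (g * ·)) (Ω.image (b * ·)) := by
            intro hd
            exact hgB (Finset.mem_filter.mpr ⟨hg, hd⟩)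
          rw [Finset.not_disjoint_iff] at hnd
          obtain ⟨x, hx1, hx2⟩ := hnd
          simp only [Finset.mem_image] at hx1 hx2
          obtain ⟨ω, hω, rfl⟩ := hx1
          obtain ⟨ω', hω', hωω'⟩ := hx2
          rw [Finset.mem_biUnion]
          refine ⟨b, Finset.mem_insert_self _ _, ?_⟩
          rw [Finset.mem_image]
          refine ⟨(ω', ω), Finset.mem_product.mpr ⟨hω', hω⟩, ?_⟩
          simp only
          rw [hωω']
          group

set_option maxHeartbeats 1600000 in
theorem stmt_17 {G : Type*} [Group G] [DecidableEq G] [Infinite G]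
    {A : Type*} [Fintype A] [Nonempty A] [TopologicalSpace A] [DiscreteTopology A]
    {I : Type*} [Preorder I] [IsDirected I (· ≤ ·)] [Nonempty I]
    (F : I → Finset G) (hne : ∀ i, (F i).Nonempty)
    (hFol : ∀ g : G, Tendsto
      (fun i => (((F i) \ (F i).image (· * g)).card : ℝ) / (F i).card) atTop (nhds 0))
    (M : Finset G) (μ : (↥(M : Set G) → A) → A)
    (τ : (G → A) → G → A)
    (hτ : ∀ (x : G → A) (g : G), τ x g = μ (fun m => x (g * m.1)))
    (U : Set (G → A)) (hUopen : IsOpen U) (hUne : U.Nonempty)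
    (hpre : ∀ x ∈ U, ∀ y ∈ U, {g : G | x g ≠ y g}.Finite → τ x = τ y → x = y) :
    Function.Surjective τ := by
  rcases subsingleton_or_nontrivial A with hA | hA
  · exact fun y => ⟨y, Subsingleton.elim _ _⟩
  by_contra hsurj
  obtain ⟨u, hu⟩ := hUne
  obtain ⟨Ω₀, hcyl⟩ := cyl_of_open hUopen hu
  -- dispatch the case M = ∅
  rcases M.eq_empty_or_nonempty with rfl | ⟨m₀, hm₀⟩
  · obtain ⟨g₀, hg₀⟩ := Infinite.exists_notMem_finset Ω₀
    obtain ⟨b, hb⟩ := exists_ne (u g₀)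
    have hu'U : Function.update u g₀ b ∈ U := hcyl _ (fun g hg =>
      Function.update_of_ne (fun h => hg₀ (by rw [← h]; exact hg)) _ _)
    have hτc : τ u = τ (Function.update u g₀ b) := by
      funext g; rw [hτ, hτ]; congr 1; funext m; exact absurd m.2 (by simp)
    have hfin : {g : G | u g ≠ Function.update u g₀ b g}.Finite := by
      apply Set.Finite.subset (Set.finite_singleton g₀)
      intro g hg
      by_contra hgg
      exact hg (Function.update_of_ne (fun h => hgg h) _ _).symm
    have heq := hpre u hu _ hu'U hfin hτc
    have : u g₀ = b := by
      conv_lhs => rw [heq]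
      simp
    exact hb this.symm
  -- Garden of Eden pattern
  simp only [Function.Surjective, not_forall, not_exists] at hsurj
  obtain ⟨y₀, hy₀⟩ := hsurj
  haveI : Finite ↥(M : Set G) := M.finite_toSet
  haveI : CompactSpace A := Finite.compactSpace
  have hτcont : Continuous τ := by
    apply continuous_pi
    intro g
    have : (fun x => τ x g) = (fun x : G → A => μ (fun m => x (g * m.1))) := by
      funext x; rw [hτ]
    rw [this]
    exact Continuous.comp continuous_of_discreteTopology
      (continuous_pi fun m => continuous_apply (g * m.1))
  have hclosed : IsClosed (Set.range τ) := (isCompact_range hτcont).isClosed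
  have hy₀mem : y₀ ∈ (Set.range τ)ᶜ := fun ⟨x, hx⟩ => hy₀ x hx
  obtain ⟨Ω, hΩpat⟩ := cyl_of_open hclosed.isOpen_compl hy₀mem
  have hGoE : ∀ x : G → A, ∃ g ∈ Ω, τ x g ≠ y₀ g := by
    intro x
    by_contra h
    push_neg at h
    exact (hΩpat (τ x) h) ⟨x, rfl⟩
  have hΩne : Ω.Nonempty := by
    rcases Ω.eq_empty_or_nonempty with rfl | h
    · obtain ⟨g, hg, _⟩ := hGoE (fun _ => Classical.arbitrary A)
      exact absurd hg (by simp)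
    · exact h
  have hGoE' : ∀ (x : G → A) (h : G), ∃ g ∈ Ω, τ x (h * g) ≠ y₀ g := by
    intro x h
    obtain ⟨g, hg, hne'⟩ := hGoE (fun k => x (h * k))
    refine ⟨g, hg, ?_⟩
    rw [hτ] at hne' ⊢
    simpa [mul_assoc] using hne'
  -- bigness of Følner sets
  have hbig : ∀ L : ℕ, ∀ᶠ i in atTop, L ≤ (F i).card := by
    intro L
    rcases Nat.eq_zero_or_pos L with rfl | hL
    · exact Eventually.of_forall (fun _ => Nat.zero_le _)
    obtain ⟨S, hS⟩ := Infinite.exists_subset_card_eq G L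
    have hev : ∀ᶠ i in atTop, ∀ g ∈ S,
        ((F i \ (F i).image (· * g)).card : ℝ) / (F i).card < 1 / L := by
      rw [eventually_all_finset]
      intro g _
      exact (hFol g).eventually_lt_const (by positivity)
    filter_upwards [hev] with i hi
    have hn : (0:ℝ) < (F i).card := by exact_mod_cast (hne i).card_pos
    have hcard : ∀ g ∈ S, (((F i) \ (F i).image (· * g)).card : ℝ) < (F i).card / L := by
      intro g hg
      have h2 := hi g hg
      rw [div_lt_iff₀ hn] at h2
      calc (((F i) \ (F i).image (· * g)).card : ℝ) < 1 / L * (F i).card := h2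
        _ = (F i).card / L := by ring
    classical
    set Good := (F i).filter (fun f => ∀ g ∈ S, f ∈ (F i).image (· * g)) with hGood
    have hsub : (F i) \ Good ⊆ S.biUnion (fun g => (F i) \ (F i).image (· * g)) := by
      intro f hf
      rw [Finset.mem_sdiff, hGood, Finset.mem_filter] at hf
      have hf1 : f ∈ F i := hf.1
      have : ∃ g ∈ S, f ∉ (F i).image (· * g) := by
        by_contra hc
        push_neg at hc
        exact hf.2 ⟨hf1, hc⟩
      obtain ⟨g, hg, hgim⟩ := this
      exact Finset.mem_biUnion.mpr ⟨g, hg, Finset.mem_sdiff.mpr ⟨hf1, hgim⟩⟩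
    have hSne : S.Nonempty := Finset.card_pos.mp (hS ▸ hL)
    have hlt : (((F i) \ Good).card : ℝ) < (F i).card := by
      calc (((F i) \ Good).card : ℝ)
          ≤ ∑ g ∈ S, (((F i) \ (F i).image (· * g)).card : ℝ) := by
            exact_mod_cast le_trans (Finset.card_le_card hsub) Finset.card_biUnion_le
        _ < ∑ _g ∈ S, ((F i).card / L : ℝ) :=
            Finset.sum_lt_sum_of_nonempty hSne (fun g hg => hcard g hg)
        _ = L * ((F i).card / L) := by rw [Finset.sum_const, hS, nsmul_eq_mul]
        _ = (F i).card := by field_simp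
    have hGne : Good.Nonempty := by
      by_contra hc
      rw [Finset.not_nonempty_iff_eq_empty] at hc
      rw [hc, Finset.sdiff_empty] at hlt
      exact lt_irrefl _ hlt
    obtain ⟨f, hf⟩ := hGne
    rw [hGood, Finset.mem_filter] at hf
    have hmem : ∀ g ∈ S, f * g⁻¹ ∈ F i := by
      intro g hg
      obtain ⟨h, hh, hhg⟩ := Finset.mem_image.mp (hf.2 g hg)
      rw [← hhg]
      simpa using hh
    calc L = S.card := hS.symm
      _ ≤ (F i).card := Finset.card_le_card_of_injOn (fun g => f * g⁻¹) hmem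
          (fun g₁ _ g₂ _ h => by
            have := mul_left_cancel h
            exact inv_injective this)
  -- constants
  set a := Fintype.card A with ha_def
  have ha : 2 ≤ a := Fintype.one_lt_card
  have hω1 : 1 ≤ Ω.card := hΩne.card_pos
  have haω : 2 ≤ a ^ Ω.card := le_trans ha (Nat.le_self_pow (by omega) a)
  set s := a ^ Ω.card - 1 with hs_def
  have hs1 : 1 ≤ s := by omega
  have hsa : s < a ^ Ω.card := by omega
  set La := Real.log a with hLa_def
  have hLa : 0 < La := Real.log_pos (by exact_mod_cast ha)
  set κ := Ω.card * La - Real.log s with hκ_def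
  have hκ : 0 < κ := by
    have h1 : (s:ℝ) < (a:ℝ) ^ Ω.card := by exact_mod_cast hsa
    have h2 : Real.log s < Real.log ((a:ℝ) ^ Ω.card) :=
      Real.log_lt_log (by exact_mod_cast hs1) h1
    rw [Real.log_pow] at h2
    simp only [hκ_def]
    linarith
  set KR := ((Ω.card : ℝ))^2 with hKR_def
  have hKR : 1 ≤ KR := by
    have : (1:ℝ) ≤ (Ω.card : ℝ) := by exact_mod_cast hω1
    nlinarith
  set ε := κ / (8 * KR * La) with hε_def
  have hε : 0 < ε := by positivity
  clear_value La κ KR ε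
  obtain ⟨n₀, hn₀⟩ := exists_nat_ge (8 * KR * (Ω₀.card : ℝ) * La / κ)
  -- choose a good Følner set
  have Ev1 : ∀ᶠ i in atTop, ∀ m ∈ M,
      ((F i \ (F i).image (· * m)).card : ℝ) / (F i).card < ε / M.card := by
    rw [eventually_all_finset]
    intro m _
    have hM : (0:ℝ) < M.card := by exact_mod_cast Finset.card_pos.mpr ⟨m₀, hm₀⟩
    exact (hFol m).eventually_lt_const (by positivity)
  have Ev2 : ∀ᶠ i in atTop, ∀ ω ∈ Ω,
      ((F i \ (F i).image (· * (m₀⁻¹ * ω⁻¹))).card : ℝ) / (F i).card < 1 / (2 * Ω.card) := by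
    rw [eventually_all_finset]
    intro ω _
    have hΩc : (0:ℝ) < Ω.card := by exact_mod_cast hΩne.card_pos
    exact (hFol (m₀⁻¹ * ω⁻¹)).eventually_lt_const (by positivity)
  obtain ⟨i, hi1, hi2, hi3⟩ := (Ev1.and (Ev2.and (hbig n₀))).exists
  classical
  set Fi := F i with hFi_def
  have hn1 : 1 ≤ Fi.card := (hne i).card_pos
  set D' := (Fi ×ˢ M).image (fun q : G × G => q.1 * q.2⁻¹) with hD'_def
  set B := Fi.filter (fun g => ∀ ω ∈ Ω, g * ω ∈ D') with hB_def
  obtain ⟨T, hTB, hTdisj, hTcov⟩ := goe_greedy Ω hΩne B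
  set Bl := T.biUnion (fun t => Ω.image (t * ·)) with hBl_def
  have c1 : Bl ⊆ D' := by
    intro x hx
    obtain ⟨t, ht, hxt⟩ := Finset.mem_biUnion.mp hx
    obtain ⟨ω, hω, rfl⟩ := Finset.mem_image.mp hxt
    exact ((Finset.mem_filter.mp (hTB ht)).2) ω hω
  have c2 : Bl.card = T.card * Ω.card := by
    rw [hBl_def, Finset.card_biUnion hTdisj,
      Finset.sum_congr rfl (fun t _ => Finset.card_image_of_injective Ω (mul_right_injective t)),
      Finset.sum_const, smul_eq_mul]
  have c4 : T.card * Ω.card ≤ D'.card := c2 ▸ Finset.card_le_card c1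
  set R := D' \ Bl with hR_def
  have c3 : R.card = D'.card - T.card * Ω.card := by rw [hR_def, Finset.card_sdiff_of_subset c1, c2]
  have c5 : B.card ≤ T.card * (Ω.card * Ω.card) := by
    calc B.card ≤ (T.biUnion (fun t => (Ω ×ˢ Ω).image fun q => t * q.1 * q.2⁻¹)).card :=
          Finset.card_le_card hTcov
      _ ≤ ∑ t ∈ T, ((Ω ×ˢ Ω).image fun q => t * q.1 * q.2⁻¹).card := Finset.card_biUnion_le
      _ ≤ ∑ _t ∈ T, (Ω ×ˢ Ω).card := Finset.sum_le_sum (fun t _ => Finset.card_image_le)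
      _ = T.card * (Ω.card * Ω.card) := by rw [Finset.sum_const, Finset.card_product, smul_eq_mul]
  have c6 : Fi.card ≤ B.card + ∑ ω ∈ Ω, (Fi \ Fi.image (· * (m₀⁻¹ * ω⁻¹))).card := by
    have hsub : Fi \ B ⊆ Ω.biUnion (fun ω => Fi \ Fi.image (· * (m₀⁻¹ * ω⁻¹))) := by
      intro g hg
      rw [Finset.mem_sdiff, hB_def, Finset.mem_filter] at hg
      have hg1 : g ∈ Fi := hg.1
      have hex : ∃ ω ∈ Ω, g * ω ∉ D' := by
        by_contra hc; push_neg at hc; exact hg.2 ⟨hg1, hc⟩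
      obtain ⟨ω, hω, hgω⟩ := hex
      refine Finset.mem_biUnion.mpr ⟨ω, hω, Finset.mem_sdiff.mpr ⟨hg1, fun him => ?_⟩⟩
      obtain ⟨f, hf, rfl⟩ := Finset.mem_image.mp him
      apply hgω
      rw [hD'_def]
      refine Finset.mem_image.mpr ⟨(f, m₀), Finset.mem_product.mpr ⟨hf, hm₀⟩, ?_⟩
      simp only
      group
    have h1 : (Fi \ B).card ≤ ∑ ω ∈ Ω, (Fi \ Fi.image (· * (m₀⁻¹ * ω⁻¹))).card :=
      le_trans (Finset.card_le_card hsub) Finset.card_biUnion_le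
    have h2 : B ⊆ Fi := Finset.filter_subset _ _
    have h3 := Finset.card_sdiff_of_subset h2
    have h4 := Finset.card_le_card h2
    omega
  have him : ∀ m : G, (Fi.image (· * m⁻¹) \ Fi).card = (Fi \ Fi.image (· * m)).card := by
    intro m
    rw [← Finset.card_image_of_injective (Fi.image (· * m⁻¹) \ Fi) (mul_left_injective m)]
    congr 1
    ext x
    simp only [Finset.mem_image, Finset.mem_sdiff, Finset.mem_image]
    constructor
    · rintro ⟨y, ⟨⟨f, hf, rfl⟩, hy⟩, rfl⟩
      have hx : f * m⁻¹ * m = f := by group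
      rw [hx]
      refine ⟨hf, ?_⟩
      rintro ⟨f', hf', hfx⟩
      apply hy
      have h5 : f * m⁻¹ = f' := by rw [← hfx]; group
      rw [h5]; exact hf'
    · rintro ⟨hx, hnx⟩
      refine ⟨x * m⁻¹, ⟨⟨x, hx, rfl⟩, ?_⟩, by group⟩
      intro hxm
      exact hnx ⟨x * m⁻¹, hxm, by group⟩
  have c7 : D'.card ≤ Fi.card + ∑ m ∈ M, (Fi \ Fi.image (· * m)).card := by
    have hsub : D' ⊆ Fi ∪ M.biUnion (fun m => Fi.image (· * m⁻¹) \ Fi) := by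
      intro x hx
      obtain ⟨⟨f, m⟩, hfm, rfl⟩ := Finset.mem_image.mp hx
      rw [Finset.mem_product] at hfm
      by_cases hxF : f * m⁻¹ ∈ Fi
      · exact Finset.mem_union_left _ hxF
      · exact Finset.mem_union_right _ (Finset.mem_biUnion.mpr ⟨m, hfm.2,
          Finset.mem_sdiff.mpr ⟨Finset.mem_image.mpr ⟨f, hfm.1, rfl⟩, hxF⟩⟩)
    calc D'.card ≤ (Fi ∪ M.biUnion (fun m => Fi.image (· * m⁻¹) \ Fi)).card :=
          Finset.card_le_card hsub
      _ ≤ Fi.card + (M.biUnion (fun m => Fi.image (· * m⁻¹) \ Fi)).card :=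
          Finset.card_union_le _ _
      _ ≤ Fi.card + ∑ m ∈ M, (Fi.image (· * m⁻¹) \ Fi).card :=
          Nat.add_le_add_left Finset.card_biUnion_le _
      _ = Fi.card + ∑ m ∈ M, (Fi \ Fi.image (· * m)).card := by
          rw [Finset.sum_congr rfl (fun m _ => him m)]
  set p₀ : {g // g ∈ Ω} → A := fun ω => y₀ ω.1 with hp₀_def
  set Φ : ({g // g ∈ Fi \ Ω₀} → A) → (G → A) :=
    fun f g => if h : g ∈ Fi \ Ω₀ then f ⟨g, h⟩ else u g with hΦ_def
  have hΦU : ∀ f, Φ f ∈ U := by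
    intro f
    apply hcyl
    intro g hg
    have hgm : g ∉ Fi \ Ω₀ := fun h => (Finset.mem_sdiff.mp h).2 hg
    simp only [hΦ_def, dif_neg hgm]
  have hτΦinj : Function.Injective (fun f => τ (Φ f)) := by
    intro f f' h
    have hfin : {g : G | Φ f g ≠ Φ f' g}.Finite := by
      apply Set.Finite.subset (Fi \ Ω₀ : Finset G).finite_toSet
      intro g hg
      by_contra hgm
      apply hg
      have hgm' : g ∉ Fi \ Ω₀ := fun hh => hgm (Finset.mem_coe.mpr hh)
      simp only [hΦ_def, dif_neg hgm']
    have heq := hpre _ (hΦU f) _ (hΦU f') hfin h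
    funext g
    have hgg := congrFun heq g.1
    simpa only [hΦ_def, dif_pos g.2] using hgg
  have hout : ∀ f g, g ∉ D' → τ (Φ f) g = τ u g := by
    intro f g hg
    rw [hτ, hτ]
    congr 1
    funext m
    have hm : m.1 ∈ M := m.2
    have hgm : g * m.1 ∉ Fi := by
      intro hmem
      apply hg
      rw [hD'_def]
      refine Finset.mem_image.mpr ⟨(g * m.1, m.1), Finset.mem_product.mpr ⟨hmem, hm⟩, ?_⟩
      simp only
      group
    have hgm2 : g * m.1 ∉ Fi \ Ω₀ := fun h => hgm (Finset.mem_sdiff.mp h).1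
    simp only [hΦ_def, dif_neg hgm2]
  have hpat : ∀ (x : G → A) (t : G), (fun ω : {g // g ∈ Ω} => τ x (t * ω.1)) ≠ p₀ := by
    intro x t heq
    obtain ⟨g, hg, hne'⟩ := hGoE' x t
    exact hne' (congrFun heq ⟨g, hg⟩)
  set Ψ : ({g // g ∈ Fi \ Ω₀} → A) →
      ({g // g ∈ R} → A) × ({t // t ∈ T} → {q : {g // g ∈ Ω} → A // q ≠ p₀}) :=
    fun f => (fun g => τ (Φ f) g.1,
      fun t => ⟨fun ω => τ (Φ f) (t.1 * ω.1), hpat (Φ f) t.1⟩) with hΨ_def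
  have hΨinj : Function.Injective Ψ := by
    intro f f' h
    apply hτΦinj
    simp only
    have hfst := congrArg Prod.fst h
    have hsnd := congrArg Prod.snd h
    simp only [hΨ_def] at hfst hsnd
    funext g
    by_cases hg : g ∈ D'
    · by_cases hb : g ∈ Bl
      · obtain ⟨t, ht, hgt⟩ := Finset.mem_biUnion.mp hb
        obtain ⟨ω, hω, rfl⟩ := Finset.mem_image.mp hgt
        have h2 := congrFun hsnd ⟨t, ht⟩
        have h3 := congrFun (Subtype.ext_iff.mp h2) ⟨ω, hω⟩
        exact h3
      · exact congrFun hfst ⟨g, Finset.mem_sdiff.mpr ⟨hg, hb⟩⟩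
    · rw [hout f g hg, hout f' g hg]
  have hcard_dom : Fintype.card ({g // g ∈ Fi \ Ω₀} → A) = a ^ (Fi \ Ω₀).card := by
    rw [Fintype.card_fun, Fintype.card_coe]
  have hcard_ne : Fintype.card {q : {g // g ∈ Ω} → A // q ≠ p₀} = s := by
    have h1 : Fintype.card {q : {g // g ∈ Ω} → A // ¬ q = p₀}
        = Fintype.card ({g // g ∈ Ω} → A) - Fintype.card {q : {g // g ∈ Ω} → A // q = p₀} :=
      Fintype.card_subtype_compl _
    rw [Fintype.card_subtype_eq, Fintype.card_fun, Fintype.card_coe] at h1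
    rw [hs_def, ← h1]
  have hcard_cod : Fintype.card
      (({g // g ∈ R} → A) × ({t // t ∈ T} → {q : {g // g ∈ Ω} → A // q ≠ p₀}))
      = a ^ R.card * s ^ T.card := by
    rw [Fintype.card_prod, Fintype.card_fun, Fintype.card_fun, Fintype.card_coe,
      Fintype.card_coe, hcard_ne]
  have key : a ^ (Fi \ Ω₀).card ≤ a ^ R.card * s ^ T.card := by
    rw [← hcard_dom, ← hcard_cod]
    exact Fintype.card_le_of_injective Ψ hΨinj
  -- real-number endgame
  have hnR : (1:ℝ) ≤ (Fi.card : ℝ) := by exact_mod_cast hn1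
  have hnpos : (0:ℝ) < (Fi.card : ℝ) := lt_of_lt_of_le one_pos hnR
  have hMc : (0:ℝ) < (M.card : ℝ) := by exact_mod_cast Finset.card_pos.mpr ⟨m₀, hm₀⟩
  have hΩc : (0:ℝ) < (Ω.card : ℝ) := by exact_mod_cast hΩne.card_pos
  have f4 : ∑ m ∈ M, ((Fi \ Fi.image (· * m)).card : ℝ) ≤ ε * Fi.card := by
    have hterm : ∀ m ∈ M, ((Fi \ Fi.image (· * m)).card : ℝ) ≤ ε / M.card * Fi.card := by
      intro m hm
      have h2 := hi1 m hm
      rw [div_lt_iff₀ hnpos] at h2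
      exact h2.le
    calc ∑ m ∈ M, ((Fi \ Fi.image (· * m)).card : ℝ)
        ≤ ∑ _m ∈ M, (ε / M.card * Fi.card) := Finset.sum_le_sum hterm
      _ = ε * Fi.card * (M.card:ℝ) / (M.card:ℝ) := by
          rw [Finset.sum_const, nsmul_eq_mul]; ring
      _ = ε * Fi.card := mul_div_cancel_right₀ _ (ne_of_gt hMc)
  have f6 : ∑ ω ∈ Ω, ((Fi \ Fi.image (· * (m₀⁻¹ * ω⁻¹))).card : ℝ) ≤ Fi.card / 2 := by
    have hterm : ∀ ω ∈ Ω, ((Fi \ Fi.image (· * (m₀⁻¹ * ω⁻¹))).card : ℝ)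
        ≤ 1 / (2 * Ω.card) * Fi.card := by
      intro ω hω
      have h2 := hi2 ω hω
      rw [div_lt_iff₀ hnpos] at h2
      exact h2.le
    calc ∑ ω ∈ Ω, ((Fi \ Fi.image (· * (m₀⁻¹ * ω⁻¹))).card : ℝ)
        ≤ ∑ _ω ∈ Ω, (1 / (2 * Ω.card) * Fi.card : ℝ) := Finset.sum_le_sum hterm
      _ = (Ω.card:ℝ) * Fi.card / ((Ω.card:ℝ) * 2) := by
          rw [Finset.sum_const, nsmul_eq_mul]; ring
      _ = Fi.card / 2 := mul_div_mul_left _ _ (ne_of_gt hΩc)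
  have f3 : (D'.card : ℝ) ≤ Fi.card + ε * Fi.card := by
    have hc : (D'.card : ℝ) ≤ Fi.card + ∑ m ∈ M, ((Fi \ Fi.image (· * m)).card : ℝ) := by
      exact_mod_cast c7
    linarith [f4]
  have f5 : (Fi.card : ℝ) ≤ (T.card : ℝ) * KR + Fi.card / 2 := by
    have hc : (Fi.card : ℝ) ≤ (T.card : ℝ) * ((Ω.card : ℝ) * Ω.card)
        + ∑ ω ∈ Ω, ((Fi \ Fi.image (· * (m₀⁻¹ * ω⁻¹))).card : ℝ) := by
      exact_mod_cast le_trans c6 (Nat.add_le_add_right c5 _)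
    have hKK : (Ω.card : ℝ) * Ω.card = KR := by rw [hKR_def]; ring
    rw [hKK] at hc
    linarith [f6]
  have hkeyR : ((a:ℝ)) ^ (Fi \ Ω₀).card ≤ (a:ℝ) ^ R.card * (s:ℝ) ^ T.card := by
    exact_mod_cast key
  have haR : (0:ℝ) < (a:ℝ) := by positivity
  have haR2 : (2:ℝ) ≤ (a:ℝ) := by exact_mod_cast ha
  have hsR : (1:ℝ) ≤ (s:ℝ) := by exact_mod_cast hs1
  have hlog : ((Fi \ Ω₀).card : ℝ) * La ≤ (R.card : ℝ) * La + (T.card : ℝ) * Real.log s := by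
    have h0 : (0:ℝ) < (a:ℝ) ^ (Fi \ Ω₀).card := by positivity
    have h2 := Real.log_le_log h0 hkeyR
    rw [Real.log_mul (by positivity) (by positivity), Real.log_pow, Real.log_pow, Real.log_pow] at h2
    rw [hLa_def]
    exact h2
  have hnp : (Fi.card : ℝ) - Ω₀.card ≤ ((Fi \ Ω₀).card : ℝ) := by
    have h2 : Fi.card ≤ (Fi \ Ω₀).card + Ω₀.card := by
      have hsub : Fi ⊆ (Fi \ Ω₀) ∪ Ω₀ := by
        intro x hx
        by_cases hxΩ : x ∈ Ω₀
        · exact Finset.mem_union_right _ hxΩ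
        · exact Finset.mem_union_left _ (Finset.mem_sdiff.mpr ⟨hx, hxΩ⟩)
      exact le_trans (Finset.card_le_card hsub) (Finset.card_union_le _ _)
    have h3 := (Nat.cast_le (α := ℝ)).mpr h2
    push_cast at h3
    linarith
  have hRR : (R.card : ℝ) = (D'.card : ℝ) - (T.card : ℝ) * Ω.card := by
    rw [c3, Nat.cast_sub c4]
    push_cast
    ring
  have hstep1 : (T.card : ℝ) * κ ≤ ((D'.card : ℝ) - (Fi.card : ℝ) + Ω₀.card) * La := by
    have e1 : ((Fi.card : ℝ) - Ω₀.card) * La ≤ ((Fi \ Ω₀).card : ℝ) * La :=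
      mul_le_mul_of_nonneg_right hnp hLa.le
    have e2 : ((Fi \ Ω₀).card : ℝ) * La
        ≤ ((D'.card : ℝ) - (T.card : ℝ) * Ω.card) * La + (T.card : ℝ) * Real.log s := by
      rw [← hRR]; exact hlog
    have e3 : (T.card : ℝ) * κ = (T.card : ℝ) * ((Ω.card : ℝ) * La)
        - (T.card : ℝ) * Real.log s := by rw [hκ_def]; ring
    linarith [e1, e2, e3]
  have hstep2 : (T.card : ℝ) * κ ≤ (ε * Fi.card + Ω₀.card) * La := by
    have hd : (D'.card : ℝ) - Fi.card + Ω₀.card ≤ ε * Fi.card + Ω₀.card := by linarith [f3]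
    calc (T.card : ℝ) * κ ≤ ((D'.card : ℝ) - Fi.card + Ω₀.card) * La := hstep1
      _ ≤ (ε * Fi.card + Ω₀.card) * La := mul_le_mul_of_nonneg_right hd hLa.le
  have hKRpos : (0:ℝ) < KR := lt_of_lt_of_le one_pos hKR
  have hεL : ε * (Fi.card:ℝ) * La = κ * Fi.card / (8 * KR) := by
    rw [hε_def, div_mul_eq_mul_div, div_mul_eq_mul_div,
      mul_div_mul_right _ _ (ne_of_gt hLa)]
  have hkL : (Ω₀.card : ℝ) * La ≤ κ * Fi.card / (8 * KR) := by
    have h1 : 8 * KR * (Ω₀.card:ℝ) * La / κ ≤ (Fi.card : ℝ) :=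
      le_trans hn₀ (by exact_mod_cast hi3)
    rw [div_le_iff₀ hκ] at h1
    rw [le_div_iff₀ (by positivity)]
    linarith [h1]
  have hstep3 : (T.card : ℝ) * κ ≤ κ * Fi.card / (4 * KR) := by
    have hr : (ε * (Fi.card:ℝ) + Ω₀.card) * La = ε * Fi.card * La + Ω₀.card * La := by ring
    have h8 : κ * (Fi.card:ℝ) / (8*KR) + κ * Fi.card / (8*KR) = κ * Fi.card / (4*KR) := by
      ring
    linarith [hstep2, hεL, hkL]
  have hstep5 : κ * (Fi.card:ℝ) / (2 * KR) ≤ (T.card : ℝ) * κ := by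
    have h5' : (Fi.card:ℝ) / 2 ≤ (T.card:ℝ) * KR := by linarith [f5]
    have h5'' := mul_le_mul_of_nonneg_right h5' (by positivity : (0:ℝ) ≤ 2 * κ)
    rw [div_le_iff₀ (by positivity)]
    calc κ * (Fi.card:ℝ) = (Fi.card:ℝ) / 2 * (2 * κ) := by ring
      _ ≤ (T.card:ℝ) * KR * (2 * κ) := h5''
      _ = (T.card:ℝ) * κ * (2 * KR) := by ring
  have hfinal : κ * (Fi.card:ℝ) / (2*KR) ≤ κ * Fi.card / (4*KR) := le_trans hstep5 hstep3
  rw [div_le_div_iff₀ (by positivity) (by positivity)] at hfinal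
  have hpos : 0 < κ * (Fi.card:ℝ) := mul_pos hκ hnpos
  have h2 : 0 < κ * (Fi.card:ℝ) * KR := mul_pos hpos hKRpos
  linarith [hfinal, h2]
end
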